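/- arXiv:1312.2371 — 7 statements merged into one kernel-verified Lean document; each statement's English description precedes it below -/
import Mathlib

section
/- Let p be a nonnegative real-valued random variable with cumulative distribution function F (i.e. F(x) = P[p ≤ x]), and let v ≥ 0 be a real number. Then sup_{a ≥ 0} F(a)·(v − a) + E[p] ≥ (1 − 1/e)·v, where E[p] ∈ [0, ∞] denotes the expectation of p (the inequality is trivial when E[p] = ∞). -/
open MeasureTheory Set

/-! Let `S` be the supremum. Every `a ≥ 0` gives `P[p > a] ≥ 1 - S / (v - a)`, so by the
layer-cake formula `E[p] ≥ ∫₀ᶜ (1 - S / (v - t)) dt = c - S log (v / (v - c))` for `0 ≤ c < v`.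
The choice `c = (1 - 1/e) v` makes the logarithm equal to `1`. -/

theorem ofReal_integral_le_lintegral_ofReal {α : Type*} [MeasurableSpace α] {μ : Measure α}
    (f : α → ℝ) : ENNReal.ofReal (∫ x, f x ∂μ) ≤ ∫⁻ x, ENNReal.ofReal (f x) ∂μ := by
  by_cases hf : Integrable f μ
  swap
  · simp [integral_undef hf]
  calc ENNReal.ofReal (∫ x, f x ∂μ)
      ≤ ENNReal.ofReal (∫ x, max (f x) 0 ∂μ) :=
        ENNReal.ofReal_le_ofReal (integral_mono hf hf.pos_part fun x => le_max_left _ _)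
    _ = ∫⁻ x, ENNReal.ofReal (f x) ∂μ := by
        rw [ofReal_integral_eq_lintegral_ofReal hf.pos_part
          (Filter.Eventually.of_forall fun x => le_max_right _ _)]
        simp only [ENNReal.ofReal_max, ENNReal.ofReal_zero, max_eq_left, zero_le]

theorem integral_one_sub_div_sub {c v : ℝ} (S : ℝ) (hc : 0 ≤ c) (hcv : c < v) :
    ∫ t in (0 : ℝ)..c, (1 - S / (v - t)) = c - S * Real.log (v / (v - c)) := by
  have hcont : ContinuousOn (fun t => S / (v - t)) (uIcc 0 c) := by
    rw [uIcc_of_le hc]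
    exact continuousOn_const.div (by fun_prop) fun t ht => by linarith [ht.2]
  have hinv : ∫ t in (0 : ℝ)..c, (v - t)⁻¹ = Real.log (v / (v - c)) := by
    rw [intervalIntegral.integral_comp_sub_left (fun x => x⁻¹) v, sub_zero,
      integral_inv_of_pos (by linarith) (by linarith)]
  have hdiv : ∫ t in (0 : ℝ)..c, S / (v - t) = S * Real.log (v / (v - c)) := by
    simp_rw [div_eq_mul_inv]
    rw [intervalIntegral.integral_const_mul, hinv, div_eq_mul_inv]
  rw [intervalIntegral.integral_sub intervalIntegrable_const hcont.intervalIntegrable, hdiv,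
    intervalIntegral.integral_const, smul_eq_mul, mul_one, sub_zero]

theorem ofReal_one_sub_div_le_measure_lt {Ω : Type*} [MeasurableSpace Ω] {μ : Measure Ω}
    [IsProbabilityMeasure μ] {p : Ω → ℝ} (hp : Measurable p) {t w S : ℝ} (hw : 0 < w)
    (h : (μ {ω | p ω ≤ t}).toReal * w ≤ S) :
    ENNReal.ofReal (1 - S / w) ≤ μ {ω | t < p ω} := by
  have hcompl : {ω | t < p ω} = {ω | p ω ≤ t}ᶜ := by ext; simp
  rw [ENNReal.ofReal_le_iff_le_toReal (measure_ne_top _ _), hcompl,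
    prob_compl_eq_one_sub (measurableSet_le hp measurable_const),
    ENNReal.toReal_sub_of_le prob_le_one ENNReal.one_ne_top, ENNReal.toReal_one]
  have : (μ {ω | p ω ≤ t}).toReal ≤ S / w := by rwa [le_div_iff₀ hw]
  linarith

theorem ofReal_sub_mul_log_le_lintegral {Ω : Type*} [MeasurableSpace Ω] {μ : Measure Ω}
    [IsProbabilityMeasure μ] {p : Ω → ℝ} (hp_meas : Measurable p) (hp_nonneg : ∀ ω, 0 ≤ p ω)
    {c v S : ℝ} (hc : 0 ≤ c) (hcv : c < v)
    (hS : ∀ t ∈ Ioc 0 c, (μ {ω | p ω ≤ t}).toReal * (v - t) ≤ S) :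
    ENNReal.ofReal (c - S * Real.log (v / (v - c))) ≤ ∫⁻ ω, ENNReal.ofReal (p ω) ∂μ :=
  calc ENNReal.ofReal (c - S * Real.log (v / (v - c)))
      = ENNReal.ofReal (∫ t in Ioc 0 c, (1 - S / (v - t))) := by
        rw [← integral_one_sub_div_sub S hc hcv, intervalIntegral.integral_of_le hc]
    _ ≤ ∫⁻ t in Ioc 0 c, ENNReal.ofReal (1 - S / (v - t)) :=
        ofReal_integral_le_lintegral_ofReal _
    _ ≤ ∫⁻ t in Ioc 0 c, μ {ω | t < p ω} :=
        setLIntegral_mono' measurableSet_Ioc fun t ht =>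
          ofReal_one_sub_div_le_measure_lt hp_meas (by linarith [ht.2]) (hS t ht)
    _ ≤ ∫⁻ t in Ioi 0, μ {ω | t < p ω} := lintegral_mono_set Ioc_subset_Ioi_self
    _ = ∫⁻ ω, ENNReal.ofReal (p ω) ∂μ :=
        (lintegral_eq_lintegral_meas_lt μ (ae_of_all _ hp_nonneg) hp_meas.aemeasurable).symm

theorem ofReal_one_sub_exp_inv_mul_le {Ω : Type*} [MeasurableSpace Ω] {μ : Measure Ω}
    [IsProbabilityMeasure μ] {p : Ω → ℝ} (hp_meas : Measurable p) (hp_nonneg : ∀ ω, 0 ≤ p ω)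
    {v S : ℝ} (hv : 0 < v) (hS : ∀ a, 0 ≤ a → (μ {ω | p ω ≤ a}).toReal * (v - a) ≤ S) :
    ENNReal.ofReal ((1 - (Real.exp 1)⁻¹) * v) ≤
      ENNReal.ofReal S + ∫⁻ ω, ENNReal.ofReal (p ω) ∂μ := by
  set c := (1 - (Real.exp 1)⁻¹) * v
  have he : 0 < (Real.exp 1)⁻¹ := inv_pos.2 (Real.exp_pos 1)
  have he1 : (Real.exp 1)⁻¹ < 1 := inv_lt_one_of_one_lt₀ (Real.one_lt_exp_iff.2 one_pos)
  have hc : 0 ≤ c := mul_nonneg (by linarith) hv.le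
  have hcv : c < v := by nlinarith
  have hlog : Real.log (v / (v - c)) = 1 := by
    rw [show v - c = (Real.exp 1)⁻¹ * v by ring, div_mul_cancel_right₀ hv.ne', inv_inv,
      Real.log_exp]
  calc ENNReal.ofReal c = ENNReal.ofReal (S + (c - S * Real.log (v / (v - c)))) := by
        rw [hlog]; ring_nf
    _ ≤ ENNReal.ofReal S + ENNReal.ofReal (c - S * Real.log (v / (v - c))) := ENNReal.ofReal_add_le
    _ ≤ ENNReal.ofReal S + ∫⁻ ω, ENNReal.ofReal (p ω) ∂μ := by
        gcongr
        exact ofReal_sub_mul_log_le_lintegral hp_meas hp_nonneg hc hcv fun t ht => hS t ht.1.le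

theorem stmt_0_general
    {Ω : Type*} [MeasurableSpace Ω] (μ : Measure Ω) [IsProbabilityMeasure μ]
    (p : Ω → ℝ) (hp_meas : Measurable p) (hp_nonneg : ∀ ω, 0 ≤ p ω)
    (F : ℝ → ℝ) (hF : ∀ x, F x = (μ {ω | p ω ≤ x}).toReal)
    (v : ℝ) :
    ENNReal.ofReal (sSup {y : ℝ | ∃ a : ℝ, 0 ≤ a ∧ y = F a * (v - a)})
        + ∫⁻ ω, ENNReal.ofReal (p ω) ∂μ
      ≥ ENNReal.ofReal ((1 - (Real.exp 1)⁻¹) * v) := by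
  rcases le_or_gt v 0 with hv | hv
  · have he : (Real.exp 1)⁻¹ ≤ 1 := inv_le_one_of_one_le₀ (Real.one_le_exp zero_le_one)
    rw [ENNReal.ofReal_of_nonpos (mul_nonpos_of_nonneg_of_nonpos (by linarith) hv)]
    exact zero_le
  have hF_le : ∀ a, 0 ≤ a → F a * (v - a) ≤ v := fun a ha => by
    have : F a ≤ 1 := hF a ▸ ENNReal.toReal_le_of_le_ofReal zero_le_one (by simp [prob_le_one])
    have : 0 ≤ F a := hF a ▸ ENNReal.toReal_nonneg
    rcases le_total a v with hav | hav <;> nlinarith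
  have hbdd : BddAbove {y : ℝ | ∃ a : ℝ, 0 ≤ a ∧ y = F a * (v - a)} :=
    ⟨v, by rintro _ ⟨a, ha, rfl⟩; exact hF_le a ha⟩
  exact ofReal_one_sub_exp_inv_mul_le hp_meas hp_nonneg hv fun a ha =>
    hF a ▸ le_csSup hbdd ⟨a, ha, rfl⟩

/-- For a nonnegative real random variable `p` with CDF `F` and any `v ≥ 0`,
`sup_{a ≥ 0} F(a)·(v − a) + E[p] ≥ (1 − 1/e)·v`, where the expectation `E[p] ∈ [0, ∞]`
is taken in the extended nonnegative reals. -/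
theorem stmt_0
    {Ω : Type*} [MeasurableSpace Ω] (μ : Measure Ω) [IsProbabilityMeasure μ]
    (p : Ω → ℝ) (hp_meas : Measurable p) (hp_nonneg : ∀ ω, 0 ≤ p ω)
    (F : ℝ → ℝ) (hF : ∀ x, F x = (μ {ω | p ω ≤ x}).toReal)
    (v : ℝ) (hv : 0 ≤ v) :
    ENNReal.ofReal (sSup {y : ℝ | ∃ a : ℝ, 0 ≤ a ∧ y = F a * (v - a)})
        + ∫⁻ ω, ENNReal.ofReal (p ω) ∂μ
      ≥ ENNReal.ofReal ((1 - (Real.exp 1)⁻¹) * v) :=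
  stmt_0_general μ p hp_meas hp_nonneg F hF v
end

section
/- Fix v > 0 and define F̂(x) = v/(e(v − x)) for 0 ≤ x ≤ (1 − 1/e)v and F̂(x) = 1 for x > (1 − 1/e)v. Then F̂ is the cumulative distribution function of a Borel probability measure μ̂ on [0, ∞); moreover sup_{a ≥ 0} F̂(a)·(v − a) = v/e, the mean of μ̂ equals (1 − 2/e)·v, and hence sup_{a ≥ 0} F̂(a)·(v − a) + ∫ x dμ̂(x) = (1 − 1/e)·v, so this worst-case price distribution makes the bound sup_{a ≥ 0} F(a)(v − a) + E[p] ≥ (1 − 1/e)v tight. In particular F̂(x)(v − x) = v/e for all x ∈ [0, (1 − 1/e)v] and F̂(x)(v − x) < v/e for x > (1 − 1/e)v. -/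
/-!
On `[0, (1 - 1/e) v]` the formula `F̂(x) = v / (e (v - x))` is chosen exactly so that
`F̂(x) (v - x) = v / e`; beyond that point `F̂ = 1` and `v - x < v / e`.
Extending `F̂` by `0` on `(-∞, 0)` gives a right-continuous monotone function rising from `0`
to `1` (with a jump `1/e` at `0`), whose Lebesgue–Stieltjes measure is `μ̂`. Its mean is the
integral of the tail `1 - F̂` over `[0, (1 - 1/e) v]`, which is
`(1 - 1/e) v - (v / e) log (v / (v / e)) = (1 - 2/e) v`.
-/

open MeasureTheory Set Filter Real Topology

namespace StieltjesFunction

noncomputable def indicatorIci (a : ℝ) (g : ℝ → ℝ) (hmono : MonotoneOn g (Ici a))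
    (hcont : ContinuousOn g (Ici a)) (hnonneg : 0 ≤ g a) : StieltjesFunction ℝ where
  toFun := (Ici a).indicator g
  mono' x y hxy := by
    by_cases hx : a ≤ x
    · have hy : a ≤ y := hx.trans hxy
      simpa [hx, hy] using hmono hx hy hxy
    · rw [indicator_of_notMem (show x ∉ Ici a from hx)]
      exact indicator_nonneg (fun z hz => hnonneg.trans (hmono self_mem_Ici hz hz)) y
  right_continuous' x := by
    rcases lt_or_ge x a with hx | hx
    · refine ((continuousAt_const (y := (0 : ℝ))).congr ?_).continuousWithinAt
      filter_upwards [eventually_lt_nhds hx] with y hy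
      exact (indicator_of_notMem (notMem_Ici.2 hy) g).symm
    · exact (hcont.mono (Ici_subset_Ici.2 hx) x self_mem_Ici).congr
        (fun y hy => indicator_of_mem (hx.trans hy) g) (indicator_of_mem hx g)

variable {a : ℝ} {g : ℝ → ℝ} {hmono : MonotoneOn g (Ici a)} {hcont : ContinuousOn g (Ici a)}
  {hnonneg : 0 ≤ g a}

lemma tendsto_indicatorIci_atBot :
    Tendsto (indicatorIci a g hmono hcont hnonneg) atBot (𝓝 0) :=
  tendsto_const_nhds.congr' <| eventuallyEq_of_mem (Iio_mem_atBot a) fun _ hx =>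
    (indicator_of_notMem (notMem_Ici.2 hx) g).symm

lemma measure_indicatorIci_Iio : (indicatorIci a g hmono hcont hnonneg).measure (Iio a) = 0 := by
  have hleft : Function.leftLim (indicatorIci a g hmono hcont hnonneg) a = 0 := by
    refine leftLim_eq_of_tendsto (tendsto_const_nhds.congr' ?_)
    filter_upwards [self_mem_nhdsWithin] with x hx
    exact (indicator_of_notMem (notMem_Ici.2 hx) g).symm
  rw [measure_Iio _ tendsto_indicatorIci_atBot, hleft, sub_zero, ENNReal.ofReal_zero]

end StieltjesFunction

lemma integral_id_eq_intervalIntegral_measureReal_Ioi {μ : Measure ℝ} [IsFiniteMeasure μ]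
    {b : ℝ} (hb : 0 ≤ b) (hIio : μ (Iio 0) = 0) (hIoi : μ (Ioi b) = 0) :
    ∫ x, x ∂μ = ∫ t in 0..b, μ.real (Ioi t) := by
  have hsupp : ∀ᵐ x ∂μ, x ∈ Icc 0 b := by
    rw [ae_iff]
    refine measure_mono_null (fun x hx => ?_) (measure_union_null hIio hIoi)
    simp only [mem_ofPred_eq, mem_Icc, not_and_or, not_le] at hx
    exact hx
  have hint : Integrable (fun x : ℝ => x) μ :=
    .of_bound measurable_id.aestronglyMeasurable b <| hsupp.mono fun x hx => by
      rw [Real.norm_eq_abs, abs_of_nonneg hx.1]; exact hx.2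
  rw [hint.integral_eq_integral_meas_lt (hsupp.mono fun x hx => hx.1),
    intervalIntegral.integral_of_le hb]
  refine setIntegral_eq_of_subset_of_forall_sdiff_eq_zero measurableSet_Ioi Ioc_subset_Ioi_self
    fun t ht => ?_
  have hbt : b < t := not_le.1 fun h => ht.2 ⟨ht.1, h⟩
  exact (measureReal_eq_zero_iff).2 (measure_mono_null (Ioi_subset_Ioi hbt.le) hIoi)

lemma integral_inv_const_sub {a b v : ℝ} (ha : a < v) (hb : b < v) :
    ∫ t in a..b, (v - t)⁻¹ = log ((v - a) / (v - b)) := by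
  rw [intervalIntegral.integral_comp_sub_left (fun x => x⁻¹) v,
    integral_inv_of_pos (sub_pos.2 hb) (sub_pos.2 ha)]

lemma exp_one_inv_lt_one : (exp 1)⁻¹ < 1 := inv_lt_one_of_one_lt₀ (one_lt_exp_iff.2 one_pos)

section WorstCase

variable {v x : ℝ}

lemma sub_one_sub_exp_one_inv_mul (v : ℝ) : v - (1 - (exp 1)⁻¹) * v = v / exp 1 := by ring

lemma one_sub_exp_one_inv_mul_pos (hv : 0 < v) : 0 < (1 - (exp 1)⁻¹) * v :=
  mul_pos (sub_pos.2 exp_one_inv_lt_one) hv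

lemma one_sub_exp_one_inv_mul_lt (hv : 0 < v) : (1 - (exp 1)⁻¹) * v < v := by
  have hdiff := sub_one_sub_exp_one_inv_mul v
  have hpos : 0 < v / exp 1 := by positivity
  linarith

/-- `F̂` on `[0, ∞)`; clamping `x` at `(1 - 1/e) v` makes it `1` beyond that point while keeping it
continuous and monotone on all of `ℝ`. -/
noncomputable def worstCaseCDF (v x : ℝ) : ℝ :=
  v / (exp 1 * (v - min x ((1 - (exp 1)⁻¹) * v)))

lemma sub_min_pos (hv : 0 < v) (x : ℝ) : 0 < v - min x ((1 - (exp 1)⁻¹) * v) :=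
  sub_pos.2 ((min_le_right _ _).trans_lt (one_sub_exp_one_inv_mul_lt hv))

lemma worstCaseCDF_of_le (hx : x ≤ (1 - (exp 1)⁻¹) * v) :
    worstCaseCDF v x = v / (exp 1 * (v - x)) := by
  rw [worstCaseCDF, min_eq_left hx]

lemma worstCaseCDF_of_ge (hv : 0 < v) (hx : (1 - (exp 1)⁻¹) * v ≤ x) : worstCaseCDF v x = 1 := by
  rw [worstCaseCDF, min_eq_right hx, sub_one_sub_exp_one_inv_mul]
  field_simp

lemma worstCaseCDF_eq_ite (hv : 0 < v) (x : ℝ) :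
    worstCaseCDF v x =
      if x ≤ (1 - (exp 1)⁻¹) * v then v / (exp 1 * (v - x)) else 1 := by
  split_ifs with hx
  · exact worstCaseCDF_of_le hx
  · exact worstCaseCDF_of_ge hv (not_le.1 hx).le

lemma monotone_worstCaseCDF (hv : 0 < v) : Monotone (worstCaseCDF v) := fun x y hxy => by
  have hpos := sub_min_pos hv y
  have hmin : min x ((1 - (exp 1)⁻¹) * v) ≤ min y ((1 - (exp 1)⁻¹) * v) := min_le_min_right _ hxy
  unfold worstCaseCDF
  gcongr

lemma continuous_worstCaseCDF (hv : 0 < v) : Continuous (worstCaseCDF v) :=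
  continuous_const.div (by fun_prop) fun x => (mul_pos (exp_pos 1) (sub_min_pos hv x)).ne'

lemma worstCaseCDF_nonneg (hv : 0 < v) (x : ℝ) : 0 ≤ worstCaseCDF v x :=
  div_nonneg hv.le (mul_pos (exp_pos 1) (sub_min_pos hv x)).le

lemma worstCaseCDF_le_one (hv : 0 < v) (x : ℝ) : worstCaseCDF v x ≤ 1 :=
  (monotone_worstCaseCDF hv (le_max_left x _)).trans_eq (worstCaseCDF_of_ge hv (le_max_right _ _))

lemma worstCaseCDF_mul_sub_of_le (hv : 0 < v) (hx : x ≤ (1 - (exp 1)⁻¹) * v) :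
    worstCaseCDF v x * (v - x) = v / exp 1 := by
  have : v - x ≠ 0 := (sub_pos.2 (hx.trans_lt (one_sub_exp_one_inv_mul_lt hv))).ne'
  rw [worstCaseCDF_of_le hx]
  field_simp

lemma worstCaseCDF_mul_sub_lt (hv : 0 < v) (hx : (1 - (exp 1)⁻¹) * v < x) :
    worstCaseCDF v x * (v - x) < v / exp 1 := by
  rw [worstCaseCDF_of_ge hv hx.le, one_mul, ← sub_one_sub_exp_one_inv_mul]
  linarith

lemma isGreatest_worstCaseCDF_revenue (hv : 0 < v) {F : ℝ → ℝ}
    (hF : ∀ x, 0 ≤ x → F x = worstCaseCDF v x) :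
    IsGreatest {y | ∃ a, 0 ≤ a ∧ y = F a * (v - a)} (v / exp 1) := by
  refine ⟨⟨0, le_rfl, ?_⟩, ?_⟩
  · rw [hF 0 le_rfl, worstCaseCDF_mul_sub_of_le hv (one_sub_exp_one_inv_mul_pos hv).le]
  · rintro y ⟨a, ha, rfl⟩
    rw [hF a ha]
    rcases le_or_gt a ((1 - (exp 1)⁻¹) * v) with h | h
    · exact (worstCaseCDF_mul_sub_of_le hv h).le
    · exact (worstCaseCDF_mul_sub_lt hv h).le

noncomputable def worstCaseStieltjes (hv : 0 < v) : StieltjesFunction ℝ :=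
  .indicatorIci 0 (worstCaseCDF v) ((monotone_worstCaseCDF hv).monotoneOn _)
    (continuous_worstCaseCDF hv).continuousOn (worstCaseCDF_nonneg hv 0)

lemma worstCaseStieltjes_of_nonneg (hv : 0 < v) (hx : 0 ≤ x) :
    worstCaseStieltjes hv x = worstCaseCDF v x :=
  indicator_of_mem (mem_Ici.2 hx) _

lemma tendsto_worstCaseStieltjes_atTop (hv : 0 < v) :
    Tendsto (worstCaseStieltjes hv) atTop (𝓝 1) :=
  tendsto_const_nhds.congr' <| eventuallyEq_of_mem (Ici_mem_atTop ((1 - (exp 1)⁻¹) * v))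
    fun x hx => by
      have hx0 : 0 ≤ x := (one_sub_exp_one_inv_mul_pos hv).le.trans hx
      rw [worstCaseStieltjes_of_nonneg hv hx0, worstCaseCDF_of_ge hv hx]

lemma tendsto_worstCaseStieltjes_atBot (hv : 0 < v) :
    Tendsto (worstCaseStieltjes hv) atBot (𝓝 0) :=
  StieltjesFunction.tendsto_indicatorIci_atBot

instance (hv : 0 < v) : IsProbabilityMeasure (worstCaseStieltjes hv).measure :=
  StieltjesFunction.isProbabilityMeasure _ (tendsto_worstCaseStieltjes_atBot hv)
    (tendsto_worstCaseStieltjes_atTop hv)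

lemma worstCaseStieltjes_measure_Iic (hv : 0 < v) (hx : 0 ≤ x) :
    ((worstCaseStieltjes hv).measure (Iic x)).toReal = worstCaseCDF v x := by
  rw [StieltjesFunction.measure_Iic _ (tendsto_worstCaseStieltjes_atBot hv), sub_zero,
    worstCaseStieltjes_of_nonneg hv hx, ENNReal.toReal_ofReal (worstCaseCDF_nonneg hv x)]

lemma worstCaseStieltjes_measure_Iio_zero (hv : 0 < v) :
    (worstCaseStieltjes hv).measure (Iio 0) = 0 :=
  StieltjesFunction.measure_indicatorIci_Iio

lemma worstCaseStieltjes_measure_Ioi_cap (hv : 0 < v) :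
    (worstCaseStieltjes hv).measure (Ioi ((1 - (exp 1)⁻¹) * v)) = 0 := by
  rw [StieltjesFunction.measure_Ioi _ (tendsto_worstCaseStieltjes_atTop hv),
    worstCaseStieltjes_of_nonneg hv (one_sub_exp_one_inv_mul_pos hv).le,
    worstCaseCDF_of_ge hv le_rfl, sub_self, ENNReal.ofReal_zero]

lemma worstCaseStieltjes_measureReal_Ioi (hv : 0 < v) (hx : 0 ≤ x) :
    (worstCaseStieltjes hv).measure.real (Ioi x) = 1 - worstCaseCDF v x := by
  rw [measureReal_def, StieltjesFunction.measure_Ioi _ (tendsto_worstCaseStieltjes_atTop hv),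
    worstCaseStieltjes_of_nonneg hv hx,
    ENNReal.toReal_ofReal (sub_nonneg.2 (worstCaseCDF_le_one hv x))]

lemma integral_id_worstCaseStieltjes_measure (hv : 0 < v) :
    ∫ x, x ∂(worstCaseStieltjes hv).measure = (1 - 2 * (exp 1)⁻¹) * v := by
  set c := (1 - (exp 1)⁻¹) * v with hc
  have hc0 : 0 < c := one_sub_exp_one_inv_mul_pos hv
  have hcv : c < v := one_sub_exp_one_inv_mul_lt hv
  have htail : EqOn (fun t => (worstCaseStieltjes hv).measure.real (Ioi t))
      (fun t => 1 - v / exp 1 * (v - t)⁻¹) (uIcc 0 c) := fun t ht => by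
    rw [uIcc_of_le hc0.le] at ht
    dsimp only
    rw [worstCaseStieltjes_measureReal_Ioi hv ht.1, worstCaseCDF_of_le ht.2, ← div_div,
      div_eq_mul_inv (v / exp 1)]
  have hinv : IntervalIntegrable (fun t => (v - t)⁻¹) volume 0 c := by
    refine (ContinuousOn.inv₀ (by fun_prop) fun t ht => (sub_pos.2 ?_).ne').intervalIntegrable
    rw [uIcc_of_le hc0.le] at ht
    exact ht.2.trans_lt hcv
  rw [integral_id_eq_intervalIntegral_measureReal_Ioi hc0.le
      (worstCaseStieltjes_measure_Iio_zero hv) (worstCaseStieltjes_measure_Ioi_cap hv),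
    intervalIntegral.integral_congr htail,
    intervalIntegral.integral_sub intervalIntegrable_const (hinv.const_mul _),
    intervalIntegral.integral_const_mul, integral_inv_const_sub hv hcv, sub_zero,
    sub_one_sub_exp_one_inv_mul, div_div_cancel₀ hv.ne', log_exp, intervalIntegral.integral_const,
    sub_zero, smul_eq_mul, mul_one, hc]
  ring

end WorstCase

/-- The worst-case price distribution for the first-price single-item auction:
`F̂(x) = v/(e(v−x))` for `0 ≤ x ≤ (1−1/e)v` and `F̂(x) = 1` for larger `x` is the CDF of a Borel
probability measure `μ̂` on `[0, ∞)`; `sup_{a ≥ 0} F̂(a)(v−a) = v/e`; the mean of `μ̂` is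
`(1 − 2/e)v`; hence `sup_{a ≥ 0} F̂(a)(v−a) + ∫ x dμ̂ = (1 − 1/e)v`, so the generic lower bound
is tight.  Moreover `F̂(x)(v−x) = v/e` on `[0, (1−1/e)v]` and `F̂(x)(v−x) < v/e` beyond. -/
theorem stmt_1
    (v : ℝ) (hv : 0 < v)
    (Fhat : ℝ → ℝ)
    (hFhat : ∀ x : ℝ, 0 ≤ x →
      Fhat x = if x ≤ (1 - (Real.exp 1)⁻¹) * v
        then v / (Real.exp 1 * (v - x)) else 1) :
    (∃ μ : Measure ℝ, IsProbabilityMeasure μ ∧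
        μ (Set.Iio 0) = 0 ∧
        (∀ x : ℝ, 0 ≤ x → (μ (Set.Iic x)).toReal = Fhat x) ∧
        (∫ x, x ∂μ) = (1 - 2 * (Real.exp 1)⁻¹) * v ∧
        sSup {y : ℝ | ∃ a : ℝ, 0 ≤ a ∧ y = Fhat a * (v - a)} + (∫ x, x ∂μ)
          = (1 - (Real.exp 1)⁻¹) * v) ∧
    sSup {y : ℝ | ∃ a : ℝ, 0 ≤ a ∧ y = Fhat a * (v - a)} = v / Real.exp 1 ∧
    (∀ x : ℝ, 0 ≤ x → x ≤ (1 - (Real.exp 1)⁻¹) * v →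
      Fhat x * (v - x) = v / Real.exp 1) ∧
    (∀ x : ℝ, (1 - (Real.exp 1)⁻¹) * v < x → Fhat x * (v - x) < v / Real.exp 1) := by
  have hF : ∀ x, 0 ≤ x → Fhat x = worstCaseCDF v x := fun x hx =>
    (hFhat x hx).trans (worstCaseCDF_eq_ite hv x).symm
  have hsup := (isGreatest_worstCaseCDF_revenue hv hF).csSup_eq
  have hmean := integral_id_worstCaseStieltjes_measure hv
  refine ⟨⟨(worstCaseStieltjes hv).measure, inferInstance, worstCaseStieltjes_measure_Iio_zero hv,
      fun x hx => ?_, hmean, ?_⟩, hsup, fun x hx hxc => ?_, fun x hxc => ?_⟩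
  · rw [worstCaseStieltjes_measure_Iic hv hx, hF x hx]
  · rw [hsup, hmean]
    ring
  · rw [hF x hx]
    exact worstCaseCDF_mul_sub_of_le hv hxc
  · rw [hF x ((one_sub_exp_one_inv_mul_pos hv).le.trans hxc.le)]
    exact worstCaseCDF_mul_sub_lt hv hxc
end

section
/- For every single-item first-price auction with valuations v_1, …, v_n ≥ 0, every tie-breaking rule, and every mixed Nash equilibrium B, the expected social welfare satisfies E_{b∼B}[SW(b)] ≥ (1 − 1/e)·max_i v_i. Equivalently, the price of anarchy of mixed Nash equilibria in first-price single-item auctions is at most e/(e − 1). -/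
/-!
In a first-price auction the revenue is the highest bid `M`, so the welfare is the sum of the
utilities plus `M`. Let `V` be the largest valuation and `U` the equilibrium utility of its owner.
Bidding `a < V` wins at least when `M < a`, so the equilibrium condition gives
`(V - a) · P(M < a) ≤ U`. With `θ = (1 - 1/e) V` the layer-cake formula yields
`θ - E[M] ≤ E[(θ - M)⁺] = ∫₀^θ P(M < a) da ≤ U ∫₀^θ da / (V - a) = U log (V / (V - θ)) = U`,
and since all equilibrium utilities are nonnegative, `E[SW] ≥ U + E[M] ≥ θ`.
-/

open MeasureTheory Set Real

section LayerCake

variable {X : Type*} [MeasurableSpace X] (μ : Measure X) {f : X → ℝ}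

theorem lintegral_ofReal_sub_eq_setLIntegral_measure_lt [SFinite μ] (hf : Measurable f)
    (hf₀ : ∀ᵐ x ∂μ, 0 ≤ f x) (θ : ℝ) :
    ∫⁻ x, ENNReal.ofReal (θ - f x) ∂μ = ∫⁻ a in Ioc 0 θ, μ {x | f x < a} := by
  have hA : MeasurableSet {p : ℝ × X | f p.2 < p.1} :=
    measurableSet_lt (hf.comp measurable_snd) measurable_fst
  calc ∫⁻ x, ENNReal.ofReal (θ - f x) ∂μ
      = ∫⁻ x, volume.restrict (Ioc 0 θ) ((fun a => (a, x)) ⁻¹' {p | f p.2 < p.1}) ∂μ := by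
        refine lintegral_congr_ae ?_
        filter_upwards [hf₀] with x hx
        have hslice : (fun a => (a, x)) ⁻¹' {p : ℝ × X | f p.2 < p.1} = Ioi (f x) := rfl
        rw [hslice, Measure.restrict_apply measurableSet_Ioi, inter_comm, Ioc_inter_Ioi,
          max_eq_right hx, Real.volume_Ioc]
    _ = (volume.restrict (Ioc 0 θ)).prod μ {p | f p.2 < p.1} := (Measure.prod_apply_symm hA).symm
    _ = ∫⁻ a in Ioc 0 θ, μ {x | f x < a} := Measure.prod_apply hA

theorem integral_max_sub_zero_eq_intervalIntegral_measureReal_lt [IsFiniteMeasure μ]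
    (hf : Measurable f) (hf₀ : ∀ᵐ x ∂μ, 0 ≤ f x) {θ : ℝ} (hθ : 0 ≤ θ) :
    ∫ x, max (θ - f x) 0 ∂μ = ∫ a in 0..θ, μ.real {x | f x < a} := by
  have hmono : Monotone fun a => μ {x | f x < a} := fun a a' h =>
    measure_mono fun x hx => lt_of_lt_of_le hx h
  have hmeas : Measurable fun x => max (θ - f x) 0 :=
    (measurable_const.sub hf).max measurable_const
  rw [intervalIntegral.integral_of_le hθ, integral_eq_lintegral_of_nonneg_ae
    (ae_of_all _ fun x => le_max_right (θ - f x) 0) hmeas.aestronglyMeasurable]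
  simp only [measureReal_def]
  rw [integral_toReal hmono.measurable.aemeasurable (ae_of_all _ fun a => measure_lt_top μ _),
    ← lintegral_ofReal_sub_eq_setLIntegral_measure_lt μ hf hf₀]
  simp only [ENNReal.ofReal_max, ENNReal.ofReal_zero, zero_le, max_eq_left]

end LayerCake

theorem intervalIntegral_inv_sub {V θ : ℝ} (hθ : 0 ≤ θ) (hθV : θ < V) :
    ∫ a in 0..θ, (V - a)⁻¹ = log (V / (V - θ)) := by
  rw [intervalIntegral.integral_comp_sub_left (fun x => x⁻¹) V, sub_zero, integral_inv]
  rw [uIcc_of_le (by linarith)]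
  exact fun h => by linarith [h.1]

theorem one_sub_inv_exp_one_mul_le_add_integral {X : Type*} [MeasurableSpace X]
    (μ : Measure X) [IsProbabilityMeasure μ] {M : X → ℝ} (hM : Measurable M)
    (hM_int : Integrable M μ) (hM₀ : ∀ᵐ x ∂μ, 0 ≤ M x) {V U : ℝ} (hV : 0 ≤ V) (hU : 0 ≤ U)
    (hdev : ∀ a, 0 ≤ a → a < V → (V - a) * μ.real {x | M x < a} ≤ U) :
    (1 - (exp 1)⁻¹) * V ≤ U + ∫ x, M x ∂μ := by
  rcases hV.eq_or_lt with rfl | hV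
  · simpa using add_nonneg hU (integral_nonneg_of_ae hM₀)
  set θ := (1 - (exp 1)⁻¹) * V
  have he : (exp 1)⁻¹ < 1 := inv_lt_one_of_one_lt₀ (one_lt_exp_iff.mpr one_pos)
  have hθ : 0 ≤ θ := mul_nonneg (sub_nonneg.2 he.le) hV.le
  have hVθ : V - θ = (exp 1)⁻¹ * V := by ring
  have hθV : θ < V := by linarith [show 0 < (exp 1)⁻¹ * V by positivity]
  have hQ : Monotone fun a => μ.real {x | M x < a} := fun a a' h =>
    measureReal_mono fun x hx => lt_of_lt_of_le hx h
  have hQ_le : ∀ a ∈ Icc 0 θ, μ.real {x | M x < a} ≤ U * (V - a)⁻¹ := fun a ha =>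
    (le_mul_inv_iff₀ (by linarith [ha.2])).2 (by linarith [hdev a ha.1 (by linarith [ha.2])])
  have hinv : IntervalIntegrable (fun a => U * (V - a)⁻¹) volume 0 θ :=
    ContinuousOn.intervalIntegrable <| continuousOn_const.mul <|
      (continuousOn_const.sub continuousOn_id).inv₀ fun a ha =>
        sub_ne_zero.2 (lt_of_le_of_lt (uIcc_of_le hθ ▸ ha).2 hθV).ne'
  rw [← sub_le_iff_le_add]
  calc θ - ∫ x, M x ∂μ = ∫ x, (θ - M x) ∂μ := by
        rw [integral_sub (integrable_const θ) hM_int, integral_const, probReal_univ, one_smul]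
    _ ≤ ∫ x, max (θ - M x) 0 ∂μ :=
        integral_mono ((integrable_const θ).sub hM_int) ((integrable_const θ).sub hM_int).pos_part
          fun x => le_max_left _ _
    _ = ∫ a in 0..θ, μ.real {x | M x < a} :=
        integral_max_sub_zero_eq_intervalIntegral_measureReal_lt μ hM hM₀ hθ
    _ ≤ ∫ a in 0..θ, U * (V - a)⁻¹ :=
        intervalIntegral.integral_mono_on hθ hQ.intervalIntegrable hinv hQ_le
    _ = U := by
        rw [intervalIntegral.integral_const_mul, intervalIntegral_inv_sub hθ hθV, hVθ,
          div_mul_cancel_right₀ hV.ne', inv_inv, log_exp, mul_one]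

structure IsTieBreakingRule {ι : Type*} [Fintype ι] (τ : (ι → ℝ) → ι → ℝ) : Prop where
  nonneg : ∀ b i, 0 ≤ τ b i
  sum_eq_one : ∀ b, ∑ i, τ b i = 1
  eq_zero_of_lt : ∀ b i, (∃ k, b i < b k) → τ b i = 0

namespace IsTieBreakingRule

open Function

variable {ι : Type*} [Fintype ι] {τ : (ι → ℝ) → ι → ℝ} (hτ : IsTieBreakingRule τ)
include hτ

theorem le_one (b : ι → ℝ) (i : ι) : τ b i ≤ 1 :=
  hτ.sum_eq_one b ▸ Finset.single_le_sum (fun j _ => hτ.nonneg b j) (Finset.mem_univ i)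

theorem eq_iSup_of_ne_zero {b : ι → ℝ} {i : ι} (h : τ b i ≠ 0) : b i = ⨆ k, b k :=
  have : Nonempty ι := ⟨i⟩
  (le_ciSup (Finite.bddAbove_range b) i).antisymm <| not_lt.1 fun hlt =>
    h (hτ.eq_zero_of_lt b i (exists_lt_of_lt_ciSup hlt))

theorem eq_one_of_forall_lt {b : ι → ℝ} {i : ι} (h : ∀ k ≠ i, b k < b i) : τ b i = 1 := by
  rw [← hτ.sum_eq_one b, Finset.sum_eq_single i (fun k _ hk => hτ.eq_zero_of_lt b k ⟨i, h k hk⟩)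
    (by simp)]

theorem sum_mul_eq_iSup (b : ι → ℝ) : ∑ i, τ b i * b i = ⨆ k, b k :=
  calc ∑ i, τ b i * b i = ∑ i, τ b i * ⨆ k, b k := Finset.sum_congr rfl fun i _ => by
        by_cases h : τ b i = 0
        · simp [h]
        · rw [← hτ.eq_iSup_of_ne_zero h]
    _ = ⨆ k, b k := by rw [← Finset.sum_mul, hτ.sum_eq_one, one_mul]

theorem sum_mul_eq_sum_mul_sub_add_iSup (v b : ι → ℝ) :
    ∑ i, τ b i * v i = ∑ i, τ b i * (v i - b i) + ⨆ k, b k := by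
  rw [← hτ.sum_mul_eq_iSup b, ← Finset.sum_add_distrib]
  simp only [mul_sub, sub_add_cancel]

section Equilibrium

variable [DecidableEq ι] {μ : Measure (ι → ℝ)} {v : ι → ℝ} {i : ι}

theorem integral_utility_nonneg (hv : 0 ≤ v i)
    (hNash : ∫ b, τ (update b i 0) i * (v i - update b i 0 i) ∂μ ≤
      ∫ b, τ b i * (v i - b i) ∂μ) :
    0 ≤ ∫ b, τ b i * (v i - b i) ∂μ :=
  (integral_nonneg fun b => mul_nonneg (hτ.nonneg _ _) (by simpa using hv)).trans hNash

theorem sub_mul_measureReal_iSup_lt_le [IsFiniteMeasure μ] {a : ℝ} (ha : a ≤ v i)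
    (hdev_int : Integrable (fun b => τ (update b i a) i * (v i - update b i a i)) μ)
    (hNash : ∫ b, τ (update b i a) i * (v i - update b i a i) ∂μ ≤
      ∫ b, τ b i * (v i - b i) ∂μ) :
    (v i - a) * μ.real {b | ⨆ k, b k < a} ≤ ∫ b, τ b i * (v i - b i) ∂μ := by
  set S := {b : ι → ℝ | ⨆ k, b k < a}
  have hS : MeasurableSet S :=
    measurableSet_lt (Measurable.iSup measurable_pi_apply) measurable_const
  calc (v i - a) * μ.real S = ∫ b, S.indicator (fun _ => v i - a) b ∂μ := by
        rw [integral_indicator_const _ hS, smul_eq_mul, mul_comm]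
    _ ≤ ∫ b, τ (update b i a) i * (v i - update b i a i) ∂μ := by
        refine integral_mono ((integrable_const _).indicator hS) hdev_int fun b => ?_
        by_cases hb : b ∈ S
        · have hwin : ∀ k ≠ i, update b i a k < update b i a i := fun k hk => by
            rw [update_of_ne hk, update_self]
            exact (le_ciSup (Finite.bddAbove_range b) k).trans_lt hb
          simp only [indicator_of_mem hb, update_self, hτ.eq_one_of_forall_lt hwin, one_mul,
            le_refl]
        · rw [indicator_of_notMem hb, update_self]
          exact mul_nonneg (hτ.nonneg _ _) (sub_nonneg.2 ha)
    _ ≤ ∫ b, τ b i * (v i - b i) ∂μ := hNash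

end Equilibrium

section Integrability

variable (hτ_meas : ∀ i, Measurable fun b => τ b i) (μ : Measure (ι → ℝ)) [IsFiniteMeasure μ]
  (v : ι → ℝ) (hInt : ∀ i, Integrable (fun b => τ b i * (v i - b i)) μ)
include hτ_meas

theorem integrable_sum_mul : Integrable (fun b => ∑ i, τ b i * v i) μ :=
  integrable_finsetSum Finset.univ fun i _ =>
    Integrable.of_bound ((hτ_meas i).mul_const _).aestronglyMeasurable ‖v i‖ <|
      ae_of_all _ fun b => by
        rw [norm_mul, Real.norm_of_nonneg (hτ.nonneg b i)]
        exact mul_le_of_le_one_left (norm_nonneg _) (hτ.le_one b i)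

include hInt

theorem integrable_iSup : Integrable (fun b : ι → ℝ => ⨆ k, b k) μ :=
  ((hτ.integrable_sum_mul hτ_meas μ v).sub
    (integrable_finsetSum Finset.univ fun i _ => hInt i)).congr <| ae_of_all _ fun b => by
      simp only [Pi.sub_apply, hτ.sum_mul_eq_sum_mul_sub_add_iSup v b, add_sub_cancel_left]

theorem integral_sum_mul_eq :
    ∫ b, ∑ i, τ b i * v i ∂μ = ∑ i, ∫ b, τ b i * (v i - b i) ∂μ + ∫ b, ⨆ k, b k ∂μ := by
  simp_rw [hτ.sum_mul_eq_sum_mul_sub_add_iSup v]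
  rw [integral_add (integrable_finsetSum Finset.univ fun i _ => hInt i)
    (hτ.integrable_iSup hτ_meas μ v hInt), integral_finsetSum Finset.univ fun i _ => hInt i]

end Integrability

end IsTieBreakingRule

theorem MeasureTheory.Measure.ae_nonneg_pi {ι : Type*} [Fintype ι] {B : ι → Measure ℝ}
    [∀ i, SigmaFinite (B i)] (hB : ∀ i, B i (Iio 0) = 0) :
    ∀ᵐ b ∂Measure.pi B, ∀ i, 0 ≤ b i :=
  ae_all_iff.2 fun i => Measure.tendsto_eval_ae_ae.eventually <|
    (measure_eq_zero_iff_ae_notMem.1 (hB i)).mono fun _ hx => not_lt.1 hx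

/-- For every single-item first-price auction (any valuations `vᵢ ≥ 0`, any
tie-breaking rule) and every mixed Nash equilibrium `B`, the expected social welfare is at least
`(1 − 1/e)·maxᵢ vᵢ`; i.e. the mixed price of anarchy is at most `e/(e−1)`. -/
theorem stmt_3
    (n : ℕ) (hn : 0 < n)
    (v : Fin n → ℝ) (hv : ∀ i, 0 ≤ v i)
    -- the tie-breaking rule: a measurable probability vector supported on the highest bidders
    (τ : (Fin n → ℝ) → Fin n → ℝ)
    (hτ_meas : ∀ i, Measurable fun b => τ b i)
    (hτ_nonneg : ∀ b i, 0 ≤ τ b i)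
    (hτ_sum : ∀ b, ∑ i, τ b i = 1)
    (hτ_max : ∀ b i, (∃ k, b i < b k) → τ b i = 0)
    -- utilities
    (u : Fin n → (Fin n → ℝ) → ℝ)
    (hu : ∀ i b, u i b = τ b i * (v i - b i))
    -- the mixed strategy profile: independent bids, supported on `[0, ∞)`
    (B : Fin n → Measure ℝ)
    [∀ i, IsProbabilityMeasure (B i)]
    (hB_supp : ∀ i, B i (Set.Iio 0) = 0)
    -- all relevant expectations exist
    (hInt : ∀ i, Integrable (u i) (Measure.pi B))
    (hIntDev : ∀ i (a : ℝ),
      Integrable (fun b => u i (Function.update b i a)) (Measure.pi B))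
    -- the Nash equilibrium condition
    (hNash : ∀ i (a : ℝ), 0 ≤ a →
      (∫ b, u i b ∂(Measure.pi B)) ≥ ∫ b, u i (Function.update b i a) ∂(Measure.pi B)) :
    (∫ b, (∑ i, τ b i * v i) ∂(Measure.pi B)) ≥ (1 - (Real.exp 1)⁻¹) * ⨆ i, v i := by
  have : Nonempty (Fin n) := Fin.pos_iff_nonempty.mp hn
  obtain rfl : u = fun i b => τ b i * (v i - b i) := funext₂ hu
  have hτ : IsTieBreakingRule τ := ⟨hτ_nonneg, hτ_sum, hτ_max⟩
  have hU₀ : ∀ i, 0 ≤ ∫ b, τ b i * (v i - b i) ∂Measure.pi B := fun i =>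
    hτ.integral_utility_nonneg (hv i) (hNash i 0 le_rfl)
  obtain ⟨i₀, hi₀⟩ := exists_eq_ciSup_of_finite (f := v)
  have hM₀ : ∀ᵐ b ∂Measure.pi B, 0 ≤ ⨆ k, b k :=
    (Measure.ae_nonneg_pi hB_supp).mono fun b hb =>
      (hb i₀).trans (le_ciSup (Finite.bddAbove_range b) i₀)
  have hbound := one_sub_inv_exp_one_mul_le_add_integral (Measure.pi B)
    (Measurable.iSup measurable_pi_apply) (hτ.integrable_iSup hτ_meas _ v hInt) hM₀ (hv i₀)
    (hU₀ i₀) fun a ha haV =>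
      hτ.sub_mul_measureReal_iSup_lt_le haV.le (hIntDev i₀ a) (hNash i₀ a ha)
  rw [← hi₀, ge_iff_le, hτ.integral_sum_mul_eq hτ_meas _ v hInt]
  exact hbound.trans <| add_le_add_left
    (Finset.single_le_sum (fun i _ => hU₀ i) (Finset.mem_univ i₀)) _
end

section
/- Let q^w, q^l : [0,∞) → [0,∞) be nondecreasing continuous functions with q^w(0) = q^l(0) = 0 and q^l(x) ≤ θ·q^w(x) for all x ≥ 0, where θ ∈ [0,1). Let p be a nonnegative random variable with CDF F, and let v ≥ 0. Then sup_{a ≥ 0} [F(a)·(v − q^w(a) + q^l(a)) − q^l(a)] + E[q^w(p)] ≥ λ(θ)·v, where λ(θ) = (θ² − θ + 1 − e^{θ−1})/(θ − 1)² (the inequality is trivial when E[q^w(p)] = ∞). -/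
/-!
Let `S` be the supremum. Since `q^l ≤ θ q^w` and `F ≤ 1`, every bid `a` gives
`S ≥ F(a) v - (θ + (1 - θ) F(a)) q^w(a)`. Applied to the largest bid `a` with `q^w(a) ≤ t`,
this yields the tail bound `P[q^w(p) > t] ≥ (v - S - t) / (v - (1 - θ) t)` for `0 < t < v - S`.
Integrating it (layer cake) gives, with `d = θ v + (1 - θ) S`,
`E[q^w(p)] ≥ (v - S) / (1 - θ) + d / (1 - θ)² · log (d / v)`,
and the tangent-line bound `1 + x ≤ eˣ`, in the form `d (θ - log (d / v)) ≤ e^{θ-1} v`,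
shows that `S` plus this is at least `λ(θ) v` whatever `S` is.
-/

open MeasureTheory Set Filter Real

theorem mul_sub_log_sub_log_le_exp_mul (θ : ℝ) {d v : ℝ} (hd : 0 ≤ d) (hv : 0 < v) :
    d * (θ - (log d - log v)) ≤ exp (θ - 1) * v := by
  rcases hd.eq_or_lt with rfl | hd
  · rw [zero_mul]
    positivity
  have h := add_one_le_exp (θ - 1 - (log d - log v))
  rw [exp_sub (θ - 1), exp_sub (log d), exp_log hd, exp_log hv, div_div_eq_mul_div,
    le_div_iff₀ hd] at h
  linarith

theorem lambda_le_one (θ : ℝ) : (θ ^ 2 - θ + 1 - exp (θ - 1)) / (θ - 1) ^ 2 ≤ 1 :=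
  div_le_one_of_le₀ (by nlinarith [add_one_le_exp (θ - 1)]) (sq_nonneg _)

theorem lambda_mul_le {θ v S : ℝ} (hθ : θ < 1) (hv : 0 < v)
    (hd : 0 ≤ v - (1 - θ) * (v - S)) :
    (θ ^ 2 - θ + 1 - exp (θ - 1)) / (θ - 1) ^ 2 * v ≤
      S + ((v - S) / (1 - θ) + (v - (1 - θ) * (v - S)) / (1 - θ) ^ 2 *
        (log (v - (1 - θ) * (v - S)) - log v)) := by
  have hb : 1 - θ ≠ 0 := by linarith
  set d := v - (1 - θ) * (v - S) with hd_def
  have key := mul_sub_log_sub_log_le_exp_mul θ hd hv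
  have expand : (S + ((v - S) / (1 - θ) + d / (1 - θ) ^ 2 * (log d - log v))) * (1 - θ) ^ 2
      = (θ ^ 2 - θ + 1) * v - d * (θ - (log d - log v)) := by
    rw [hd_def]
    field_simp
    ring
  rw [show (θ - 1) ^ 2 = (1 - θ) ^ 2 by ring, div_mul_eq_mul_div,
    div_le_iff₀ (by positivity), expand]
  linarith

section Integral

variable {b c m : ℝ}

theorem continuousOn_antideriv_sub_div_sub_mul (hb : 0 < b) (hbm : b * m ≤ c) :
    ContinuousOn (fun t => t / b + (c - b * m) / b ^ 2 * log (c - b * t)) (Iic m) := by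
  rcases hbm.eq_or_lt with hc | hc
  -- `log (c - b t)` jumps at `t = m` here, but its coefficient is `0`.
  · simp only [hc, sub_self, zero_div, zero_mul, add_zero]
    fun_prop
  refine ContinuousOn.add (by fun_prop) (ContinuousOn.mul (by fun_prop) ?_)
  refine ContinuousOn.log (by fun_prop) fun t ht => ?_
  nlinarith [mem_Iic.1 ht]

theorem hasDerivAt_antideriv_sub_div_sub_mul (hb : 0 < b) (hbm : b * m ≤ c) {t : ℝ}
    (ht : t < m) :
    HasDerivAt (fun t => t / b + (c - b * m) / b ^ 2 * log (c - b * t))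
      ((m - t) / (c - b * t)) t := by
  have hpos : 0 < c - b * t := by nlinarith
  have hlin : HasDerivAt (fun t => c - b * t) (-b) t := by
    simpa using ((hasDerivAt_id t).const_mul b).const_sub c
  refine (((hasDerivAt_id t).div_const b).add
    ((hlin.log hpos.ne').const_mul ((c - b * m) / b ^ 2))).congr_deriv ?_
  field_simp
  ring

theorem intervalIntegrable_sub_div_sub_mul (hb : 0 < b) (hbm : b * m ≤ c) (hm : 0 ≤ m) :
    IntervalIntegrable (fun t => (m - t) / (c - b * t)) volume 0 m :=
  (intervalIntegrable_iff_integrableOn_Ioc_of_le hm).2 <|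
    intervalIntegral.integrableOn_deriv_of_nonneg
      ((continuousOn_antideriv_sub_div_sub_mul hb hbm).mono Icc_subset_Iic_self)
      (fun _ ht => hasDerivAt_antideriv_sub_div_sub_mul hb hbm ht.2)
      (fun t ht => div_nonneg (by linarith [ht.2]) (by nlinarith [ht.2]))

theorem integral_sub_div_sub_mul (hb : 0 < b) (hbm : b * m ≤ c) (hm : 0 ≤ m) :
    ∫ t in (0 : ℝ)..m, (m - t) / (c - b * t) =
      m / b + (c - b * m) / b ^ 2 * (log (c - b * m) - log c) := by
  rw [intervalIntegral.integral_eq_sub_of_hasDerivAt_of_le hm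
    ((continuousOn_antideriv_sub_div_sub_mul hb hbm).mono Icc_subset_Iic_self)
    (fun _ ht => hasDerivAt_antideriv_sub_div_sub_mul hb hbm ht.2)
    (intervalIntegrable_sub_div_sub_mul hb hbm hm)]
  ring_nf

end Integral

section Probability

variable {Ω : Type*} [MeasurableSpace Ω]

theorem ofReal_intervalIntegral_le_lintegral (μ : Measure Ω) {X : Ω → ℝ}
    (hX0 : 0 ≤ᵐ[μ] X) (hX : AEMeasurable X μ) {f : ℝ → ℝ} {m : ℝ} (hm : 0 ≤ m)
    (hf : IntervalIntegrable f volume 0 m) (hf0 : ∀ t ∈ Ioo 0 m, 0 ≤ f t)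
    (hfX : ∀ t ∈ Ioo 0 m, ENNReal.ofReal (f t) ≤ μ {ω | t < X ω}) :
    ENNReal.ofReal (∫ t in (0 : ℝ)..m, f t) ≤ ∫⁻ ω, ENNReal.ofReal (X ω) ∂μ := by
  have hf_int : IntegrableOn f (Ioo 0 m) :=
    ((intervalIntegrable_iff_integrableOn_Ioc_of_le hm).1 hf).mono_set Ioo_subset_Ioc_self
  have htail_meas : Measurable fun t => μ {ω | t < X ω} :=
    Antitone.measurable fun _ _ hst => measure_mono fun _ hω => hst.trans_lt hω
  rw [intervalIntegral.integral_of_le hm, integral_Ioc_eq_integral_Ioo,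
    ofReal_integral_eq_lintegral_ofReal hf_int
      ((ae_restrict_iff' measurableSet_Ioo).2 (Eventually.of_forall hf0)),
    lintegral_eq_lintegral_meas_lt μ hX0 hX]
  calc ∫⁻ t in Ioo 0 m, ENNReal.ofReal (f t)
      ≤ ∫⁻ t in Ioo 0 m, μ {ω | t < X ω} := setLIntegral_mono htail_meas hfX
    _ ≤ ∫⁻ t in Ioi 0, μ {ω | t < X ω} := lintegral_mono_set Ioo_subset_Ioi_self

theorem measure_comp_le_le_of_forall (μ : Measure Ω) {X : Ω → ℝ} (hX0 : ∀ ω, 0 ≤ X ω)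
    {g : ℝ → ℝ} (hg : ContinuousOn g (Ici 0)) (hg_mono : MonotoneOn g (Ici 0)) {t : ℝ}
    (ht : g 0 ≤ t) {c : ENNReal}
    (hc : ∀ a, 0 ≤ a → g a ≤ t → μ {ω | X ω ≤ a} ≤ c) :
    μ {ω | g (X ω) ≤ t} ≤ c := by
  set T := Ici 0 ∩ g ⁻¹' Iic t
  by_cases hT : BddAbove T
  · have hA : sSup T ∈ T :=
      (hg.preimage_isClosed_of_isClosed isClosed_Ici isClosed_Iic).csSup_mem
        ⟨0, mem_Ici.2 le_rfl, ht⟩ hT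
    exact (measure_mono fun ω hω => le_csSup hT ⟨hX0 ω, hω⟩).trans (hc _ hA.1 hA.2)
  have hgt : ∀ a, 0 ≤ a → g a ≤ t := fun a ha => by
    obtain ⟨a', ha'T, haa'⟩ := not_bddAbove_iff.1 hT a
    exact (hg_mono ha ha'T.1 haa'.le).trans ha'T.2
  have hlim := tendsto_measure_iUnion_atTop (μ := μ) (s := fun n : ℕ => {ω | X ω ≤ n})
    fun i j hij ω (hω : X ω ≤ i) => hω.trans (Nat.cast_le.2 hij)
  have hunion : ⋃ n : ℕ, {ω | X ω ≤ n} = univ :=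
    iUnion_eq_univ_iff.2 fun ω => exists_nat_ge (X ω)
  rw [hunion] at hlim
  calc μ {ω | g (X ω) ≤ t} ≤ μ univ := measure_mono (subset_univ _)
    _ ≤ c := le_of_tendsto' hlim fun n => hc n n.cast_nonneg (hgt n n.cast_nonneg)

end Probability

section Auction

variable {θ v S : ℝ} {qw : ℝ → ℝ} {Ω : Type*} [MeasurableSpace Ω] {μ : Measure Ω}
  [IsProbabilityMeasure μ] {p : Ω → ℝ}

theorem ofReal_le_measure_lt_comp (hθ0 : 0 ≤ θ)
    (hqw_mono : MonotoneOn qw (Ici 0)) (hqw_cont : ContinuousOn qw (Ici 0)) (hqw0 : qw 0 = 0)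
    (hq_meas : Measurable fun ω => qw (p ω)) (hp_nonneg : ∀ ω, 0 ≤ p ω) (hS0 : 0 ≤ S)
    (hS : ∀ a, 0 ≤ a →
      μ.real {ω | p ω ≤ a} * v - (θ + (1 - θ) * μ.real {ω | p ω ≤ a}) * qw a ≤ S)
    {t : ℝ} (ht : t ∈ Ioo 0 (v - S)) :
    ENNReal.ofReal ((v - S - t) / (v - (1 - θ) * t)) ≤ μ {ω | t < qw (p ω)} := by
  obtain ⟨ht0, htS⟩ := ht
  have hden : 0 < v - (1 - θ) * t := by nlinarith
  have hφ0 : 0 ≤ (S + θ * t) / (v - (1 - θ) * t) := div_nonneg (by positivity) hden.le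
  have hle : μ {ω | qw (p ω) ≤ t} ≤ ENNReal.ofReal ((S + θ * t) / (v - (1 - θ) * t)) := by
    refine measure_comp_le_le_of_forall μ hp_nonneg hqw_cont hqw_mono (hqw0.trans_le ht0.le)
      fun a ha hat => ?_
    rw [← ofReal_measureReal]
    refine ENNReal.ofReal_le_ofReal ((le_div_iff₀ hden).2 ?_)
    have hF0 : 0 ≤ μ.real {ω | p ω ≤ a} := measureReal_nonneg
    have hF1 : μ.real {ω | p ω ≤ a} ≤ 1 := measureReal_le_one
    have hweight : 0 ≤ θ + (1 - θ) * μ.real {ω | p ω ≤ a} := by nlinarith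
    nlinarith [hS a ha, mul_le_mul_of_nonneg_left hat hweight]
  have hcompl : {ω | t < qw (p ω)} = {ω | qw (p ω) ≤ t}ᶜ := by
    ext
    simp
  have hsplit : (v - S - t) / (v - (1 - θ) * t) = 1 - (S + θ * t) / (v - (1 - θ) * t) := by
    rw [eq_sub_iff_add_eq, ← add_div, div_eq_one_iff_eq hden.ne']
    ring
  have hmeas : MeasurableSet {ω | qw (p ω) ≤ t} := hq_meas measurableSet_Iic
  rw [hcompl, prob_compl_eq_one_sub hmeas, hsplit,
    ENNReal.ofReal_sub 1 hφ0, ENNReal.ofReal_one]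
  exact tsub_le_tsub_left hle 1

theorem lambda_mul_le_add_lintegral (hθ0 : 0 ≤ θ) (hθ1 : θ < 1)
    (hqw_mono : MonotoneOn qw (Ici 0)) (hqw_cont : ContinuousOn qw (Ici 0)) (hqw0 : qw 0 = 0)
    (hp_meas : Measurable p) (hp_nonneg : ∀ ω, 0 ≤ p ω) (hv : 0 ≤ v)
    (hS : ∀ a, 0 ≤ a →
      μ.real {ω | p ω ≤ a} * v - (θ + (1 - θ) * μ.real {ω | p ω ≤ a}) * qw a ≤ S) :
    ENNReal.ofReal ((θ ^ 2 - θ + 1 - exp (θ - 1)) / (θ - 1) ^ 2 * v) ≤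
      ENNReal.ofReal S + ∫⁻ ω, ENNReal.ofReal (qw (p ω)) ∂μ := by
  have hS0 : 0 ≤ S := by
    have h := hS 0 le_rfl
    rw [hqw0] at h
    nlinarith [measureReal_nonneg (μ := μ) (s := {ω | p ω ≤ 0})]
  rcases le_or_gt v S with hvS | hSv
  · exact (ENNReal.ofReal_le_ofReal
      ((mul_le_of_le_one_left hv (lambda_le_one θ)).trans hvS)).trans le_self_add
  have hv0 : 0 < v := hS0.trans_lt hSv
  have hb : 0 < 1 - θ := by linarith
  have hm : 0 ≤ v - S := by linarith
  have hbm : (1 - θ) * (v - S) ≤ v := by nlinarith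
  have hq_nonneg : ∀ ω, 0 ≤ qw (p ω) := fun ω =>
    hqw0 ▸ hqw_mono (mem_Ici.2 le_rfl) (mem_Ici.2 (hp_nonneg ω)) (hp_nonneg ω)
  have hq_meas : Measurable fun ω => qw (p ω) := by
    have hcont : Continuous fun x => qw (max x 0) :=
      hqw_cont.comp_continuous (continuous_id.max continuous_const) fun x => le_max_right x 0
    convert hcont.measurable.comp hp_meas using 1
    funext ω
    simp [hp_nonneg ω]
  calc ENNReal.ofReal ((θ ^ 2 - θ + 1 - exp (θ - 1)) / (θ - 1) ^ 2 * v)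
      ≤ ENNReal.ofReal (S + ∫ t in (0 : ℝ)..(v - S), (v - S - t) / (v - (1 - θ) * t)) := by
        rw [integral_sub_div_sub_mul hb hbm hm]
        exact ENNReal.ofReal_le_ofReal (lambda_mul_le hθ1 hv0 (by linarith))
    _ ≤ ENNReal.ofReal S +
          ENNReal.ofReal (∫ t in (0 : ℝ)..(v - S), (v - S - t) / (v - (1 - θ) * t)) :=
        ENNReal.ofReal_add_le
    _ ≤ _ := add_le_add le_rfl (ofReal_intervalIntegral_le_lintegral μ
          (Eventually.of_forall hq_nonneg) hq_meas.aemeasurable hm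
          (intervalIntegrable_sub_div_sub_mul hb hbm hm)
          (fun t ht => div_nonneg (by linarith [ht.2]) (by nlinarith [ht.2]))
          fun t ht => ofReal_le_measure_lt_comp hθ0 hqw_mono hqw_cont hqw0 hq_meas
            hp_nonneg hS0 hS ht)

end Auction

theorem stmt_10_general
    (θ : ℝ) (hθ0 : 0 ≤ θ) (hθ1 : θ < 1)
    (qw ql : ℝ → ℝ)
    (hqw_mono : ∀ x y, 0 ≤ x → x ≤ y → qw x ≤ qw y)
    (hqw_cont : ContinuousOn qw (Set.Ici 0))
    (hqw0 : qw 0 = 0)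
    (hql_nonneg : ∀ x, 0 ≤ x → 0 ≤ ql x)
    (hql_le : ∀ x, 0 ≤ x → ql x ≤ θ * qw x)
    {Ω : Type*} [MeasurableSpace Ω] (μ : Measure Ω) [IsProbabilityMeasure μ]
    (p : Ω → ℝ) (hp_meas : Measurable p) (hp_nonneg : ∀ ω, 0 ≤ p ω)
    (F : ℝ → ℝ) (hF : ∀ x, F x = (μ {ω | p ω ≤ x}).toReal)
    (v : ℝ) (hv : 0 ≤ v) :
    ENNReal.ofReal
        (sSup {y : ℝ | ∃ a : ℝ, 0 ≤ a ∧ y = F a * (v - qw a + ql a) - ql a})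
        + ∫⁻ ω, ENNReal.ofReal (qw (p ω)) ∂μ
      ≥ ENNReal.ofReal
          (((θ ^ 2 - θ + 1 - Real.exp (θ - 1)) / (θ - 1) ^ 2) * v) := by
  have hF_real : ∀ a, μ.real {ω | p ω ≤ a} = F a := fun a => (hF a).symm
  have hF0 : ∀ a, 0 ≤ F a := fun a => hF_real a ▸ measureReal_nonneg
  have hF1 : ∀ a, F a ≤ 1 := fun a => hF_real a ▸ measureReal_le_one
  have hqw_nonneg : ∀ x, 0 ≤ x → 0 ≤ qw x := fun x hx => hqw0 ▸ hqw_mono 0 x le_rfl hx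
  have hbdd : BddAbove {y : ℝ | ∃ a : ℝ, 0 ≤ a ∧ y = F a * (v - qw a + ql a) - ql a} := by
    refine ⟨v, ?_⟩
    rintro _ ⟨a, ha, rfl⟩
    nlinarith [hF0 a, hF1 a, hqw_nonneg a ha, hql_nonneg a ha]
  refine lambda_mul_le_add_lintegral hθ0 hθ1 (fun x hx y _ hxy => hqw_mono x y hx hxy) hqw_cont
    hqw0 hp_meas hp_nonneg hv fun a ha => ?_
  have hsup := le_csSup hbdd ⟨a, ha, rfl⟩
  rw [hF_real]
  nlinarith [mul_nonneg (sub_nonneg.2 (hF1 a)) (sub_nonneg.2 (hql_le a ha))]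

/-- Bid-dependent single-item version of the key lemma: for payment functions
`q^w, q^l` (nondecreasing, continuous, zero at `0`, with `q^l ≤ θ·q^w` for some `θ ∈ [0,1)`),
for any nonnegative random variable `p` with CDF `F` and any `v ≥ 0`,
`sup_{a ≥ 0} [F(a)·(v − q^w(a) + q^l(a)) − q^l(a)] + E[q^w(p)] ≥ λ(θ)·v`,
where `λ(θ) = (θ² − θ + 1 − e^{θ−1})/(θ−1)²` and expectations are taken in `[0, ∞]`. -/
theorem stmt_10
    (θ : ℝ) (hθ0 : 0 ≤ θ) (hθ1 : θ < 1)
    (qw ql : ℝ → ℝ)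
    (hqw_mono : ∀ x y, 0 ≤ x → x ≤ y → qw x ≤ qw y)
    (hql_mono : ∀ x y, 0 ≤ x → x ≤ y → ql x ≤ ql y)
    (hqw_cont : ContinuousOn qw (Set.Ici 0))
    (hql_cont : ContinuousOn ql (Set.Ici 0))
    (hqw0 : qw 0 = 0) (hql0 : ql 0 = 0)
    (hql_nonneg : ∀ x, 0 ≤ x → 0 ≤ ql x)
    (hql_le : ∀ x, 0 ≤ x → ql x ≤ θ * qw x)
    {Ω : Type*} [MeasurableSpace Ω] (μ : Measure Ω) [IsProbabilityMeasure μ]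
    (p : Ω → ℝ) (hp_meas : Measurable p) (hp_nonneg : ∀ ω, 0 ≤ p ω)
    (F : ℝ → ℝ) (hF : ∀ x, F x = (μ {ω | p ω ≤ x}).toReal)
    (v : ℝ) (hv : 0 ≤ v) :
    ENNReal.ofReal
        (sSup {y : ℝ | ∃ a : ℝ, 0 ≤ a ∧ y = F a * (v - qw a + ql a) - ql a})
        + ∫⁻ ω, ENNReal.ofReal (qw (p ω)) ∂μ
      ≥ ENNReal.ofReal
          (((θ ^ 2 - θ + 1 - Real.exp (θ - 1)) / (θ - 1) ^ 2) * v) :=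
  stmt_10_general θ hθ0 hθ1 qw ql hqw_mono hqw_cont hqw0 hql_nonneg hql_le μ p hp_meas hp_nonneg F
    hF v hv
end

section
/- For every real v > 0, every A with 0 ≤ A ≤ v, and every θ ∈ [0,1), the inequality A + ∫_0^{v−A} (v − A − y)/(v + (θ − 1)y) dy ≥ λ(θ)·v holds, where λ(θ) = (θ² − θ + 1 − e^{θ−1})/(θ − 1)². (The left-hand side, as a function of A, attains its minimum at A = v(θ·e^{1−θ} − 1)/((θ − 1)e^{1−θ}).) -/
/-!
With `c = 1 - θ`, the integrand is `(B - y)/(v - c y)` with `B = v - A`, which integrates in closed form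
to `B/c + d/c² · log (d/v)` where `d = v - cB = θv + cA ≥ 0`. Substituting `t = d/v`, the difference
between the left-hand side and `λ(θ) v` becomes `v/c² · (t (log t + c - 1) + e^{-c})`, and
`t ↦ t (log t + c - 1)` attains its minimum `-e^{-c}` at `t = e^{-c}`.
-/

open Real Set intervalIntegral

lemma neg_exp_neg_le_mul_log_add_sub_one {t : ℝ} (ht : 0 ≤ t) (c : ℝ) :
    -exp (-c) ≤ t * (log t + c - 1) := by
  rcases ht.eq_or_lt with rfl | ht
  · simp [(exp_pos _).le]
  have htangent : t * (-(log t + c) + 1) ≤ t * exp (-(log t + c)) :=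
    mul_le_mul_of_nonneg_left (add_one_le_exp _) ht.le
  have hexp : t * exp (-(log t + c)) = exp (-c) := by
    rw [neg_add, exp_add, exp_neg, exp_log ht]
    field_simp
  linarith

lemma integral_sub_div_sub_mul_s11 {v c B : ℝ} (hc : 0 < c) (hB : 0 ≤ B) (hcB : c * B ≤ v) :
    ∫ y in (0 : ℝ)..B, (B - y) / (v - c * y)
      = B / c + (v - c * B) / c ^ 2 * log ((v - c * B) / v) := by
  set d := v - c * B with hd_def
  have hd : 0 ≤ d := by linarith
  have hden : ∀ y ∈ Ioo 0 B, 0 < v - c * y := fun y hy => by nlinarith [hy.2]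
  set F : ℝ → ℝ := fun y => y / c + d / c ^ 2 * log (v - c * y)
  have hderiv : ∀ y ∈ Ioo 0 B, HasDerivAt F ((B - y) / (v - c * y)) y := by
    intro y hy
    have hlin : HasDerivAt (fun y => v - c * y) (-c) y := by
      simpa using ((hasDerivAt_id y).const_mul c).const_sub v
    have hF : HasDerivAt F (1 / c + d / c ^ 2 * (-c / (v - c * y))) y :=
      ((hasDerivAt_id y).div_const c).add ((hlin.log (hden y hy).ne').const_mul (d / c ^ 2))
    convert hF using 1
    have hw := (hden y hy).ne'
    rw [hd_def, mul_div_assoc', div_add_div _ _ hc.ne' hw,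
      div_eq_div_iff hw (mul_ne_zero hc.ne' hw)]
    field_simp
    ring
  -- when `d = 0` the logarithmic term vanishes, so `F` stays continuous at the pole `y = B`
  have hcont : ContinuousOn F (Icc 0 B) := by
    rcases hd.eq_or_lt with hd0 | hd0
    · simp only [F, ← hd0, zero_div, zero_mul, add_zero]
      fun_prop
    · refine continuousOn_id.div_const c |>.add (continuousOn_const.mul (ContinuousOn.log
        (by fun_prop) fun y hy => ?_))
      nlinarith [hy.2]
  have hnonneg : ∀ y ∈ Ioo 0 B, 0 ≤ (B - y) / (v - c * y) :=
    fun y hy => div_nonneg (by linarith [hy.2]) (hden y hy).le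
  rw [integral_eq_sub_of_hasDerivAt_of_le hB hcont hderiv
    ((intervalIntegrable_iff_integrableOn_Ioc_of_le hB).2
      (integrableOn_deriv_of_nonneg hcont hderiv hnonneg))]
  rcases hd.eq_or_lt with hd0 | hd0
  · simp [F, ← hd0]
  · have hv : 0 < v := by nlinarith
    simp only [F, mul_zero, sub_zero, zero_div, zero_add, log_div hd0.ne' hv.ne']
    ring

/-- For every `v > 0`, `0 ≤ A ≤ v` and `θ ∈ [0,1)`,
`A + ∫_0^{v−A} (v − A − y)/(v + (θ − 1)y) dy ≥ λ(θ)·v`, where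
`λ(θ) = (θ² − θ + 1 − e^{θ−1})/(θ−1)²`. -/
theorem stmt_11
    (v A θ : ℝ) (hv : 0 < v) (hA0 : 0 ≤ A) (hAv : A ≤ v)
    (hθ0 : 0 ≤ θ) (hθ1 : θ < 1) :
    A + ∫ y in (0 : ℝ)..(v - A), (v - A - y) / (v + (θ - 1) * y)
      ≥ ((θ ^ 2 - θ + 1 - Real.exp (θ - 1)) / (θ - 1) ^ 2) * v := by
  have hc : 0 < 1 - θ := by linarith
  set d := θ * v + (1 - θ) * A
  have hd : 0 ≤ d := by positivity
  have hint : ∫ y in (0 : ℝ)..(v - A), (v - A - y) / (v + (θ - 1) * y)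
      = (v - A) / (1 - θ) + d / (1 - θ) ^ 2 * log (d / v) := by
    have hcB : (1 - θ) * (v - A) ≤ v := by nlinarith
    have hd_eq : v - (1 - θ) * (v - A) = d := by ring
    rw [← hd_eq]
    convert integral_sub_div_sub_mul_s11 hc (sub_nonneg.2 hAv) hcB using 3
    ring
  have hmin := neg_exp_neg_le_mul_log_add_sub_one (div_nonneg hd hv.le) (1 - θ)
  have hgap : A + ((v - A) / (1 - θ) + d / (1 - θ) ^ 2 * log (d / v))
      - (θ ^ 2 - θ + 1 - exp (θ - 1)) / (θ - 1) ^ 2 * v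
      = v / (1 - θ) ^ 2 * (d / v * (log (d / v) + (1 - θ) - 1) + exp (-(1 - θ))) := by
    have hθ : θ - 1 ≠ 0 := by linarith
    rw [neg_sub]
    field_simp
    ring
  rw [hint, ge_iff_le, ← sub_nonneg, hgap]
  exact mul_nonneg (by positivity) (by linarith)
end

section
/- Let M be a finite set of items and S ⊆ M. Let v : 2^M → ℝ be monotone with v(∅) = 0, and let f : M → ℝ satisfy v(T) ≥ Σ_{j∈T} f(j) for every T ⊆ S. For each item j let q_j^w, q_j^l : [0,∞) → [0,∞) be nondecreasing with q_j^w(0) = q_j^l(0) = 0 and q_j^l ≤ q_j^w. Let b = (b_j)_{j∈M} be a fixed bid vector with b_j ≥ 0 and b_j = 0 for j ∉ S, and let X be a random subset of M (distributed according to an arbitrary probability measure on 2^M). Then E[v(X) − Σ_{j∈X} q_j^w(b_j) − Σ_{j∈M∖X} q_j^l(b_j)] ≥ Σ_{j∈S} ( P[j ∈ X]·(f(j) − q_j^w(b_j) + q_j^l(b_j)) − q_j^l(b_j) ). -/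
open Finset

/-- Let `S ⊆ M` (items), `v` a monotone normalized valuation, and `f` an
additive lower bound for `v` on subsets of `S`.  Let `q_j^w, q_j^l` be winner/loser payment
functions, `b` a bid vector vanishing outside `S`, and let `X` be a random subset of `M`
(with distribution given by weights `w`).  Then
`E[v(X) − Σ_{j∈X} q_j^w(b_j) − Σ_{j∉X} q_j^l(b_j)]
  ≥ Σ_{j∈S} ( P[j ∈ X]·(f(j) − q_j^w(b_j) + q_j^l(b_j)) − q_j^l(b_j) )`. -/
theorem stmt_12
    (m : ℕ) (S : Finset (Fin m))
    (v : Finset (Fin m) → ℝ)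
    (hv_mono : ∀ T T' : Finset (Fin m), T ⊆ T' → v T ≤ v T')
    (hv_empty : v ∅ = 0)
    (f : Fin m → ℝ)
    (hf : ∀ T : Finset (Fin m), T ⊆ S → (∑ j ∈ T, f j) ≤ v T)
    (qw ql : Fin m → ℝ → ℝ)
    (hqw_mono : ∀ j x y, 0 ≤ x → x ≤ y → qw j x ≤ qw j y)
    (hql_mono : ∀ j x y, 0 ≤ x → x ≤ y → ql j x ≤ ql j y)
    (hqw0 : ∀ j, qw j 0 = 0) (hql0 : ∀ j, ql j 0 = 0)
    (hql_le : ∀ j x, 0 ≤ x → ql j x ≤ qw j x)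
    (b : Fin m → ℝ)
    (hb_nonneg : ∀ j, 0 ≤ b j)
    (hb_zero : ∀ j, j ∉ S → b j = 0)
    -- the distribution of the random set `X`, given by weights on subsets of `M`
    (w : Finset (Fin m) → ℝ)
    (hw_nonneg : ∀ T, 0 ≤ w T)
    (hw_sum : ∑ T : Finset (Fin m), w T = 1) :
    (∑ T : Finset (Fin m),
        w T * (v T - (∑ j ∈ T, qw j (b j)) - ∑ j ∈ Tᶜ, ql j (b j)))
      ≥ ∑ j ∈ S,
          ((∑ T ∈ Finset.univ.filter (fun T : Finset (Fin m) => j ∈ T), w T)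
              * (f j - qw j (b j) + ql j (b j)) - ql j (b j)) := by

  have hqw0' : ∀ j : Fin m, j ∉ S → qw j (b j) = 0 := fun j hj => by
    rw [hb_zero j hj, hqw0]
  have hql0' : ∀ j : Fin m, j ∉ S → ql j (b j) = 0 := fun j hj => by
    rw [hb_zero j hj, hql0]
  have key : ∀ T : Finset (Fin m),
      (∑ j ∈ S, ((if j ∈ T then (f j - qw j (b j) + ql j (b j)) else 0) - ql j (b j)))
        ≤ v T - (∑ j ∈ T, qw j (b j)) - ∑ j ∈ Tᶜ, ql j (b j) := by
    intro T
    have h1 : ∑ j ∈ T, qw j (b j) = ∑ j ∈ S ∩ T, qw j (b j) := by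
      refine (Finset.sum_subset Finset.inter_subset_right ?_).symm
      intro j hjT hj
      exact hqw0' j (fun hjS => hj (Finset.mem_inter.mpr ⟨hjS, hjT⟩))
    have h2 : ∑ j ∈ Tᶜ, ql j (b j) = ∑ j ∈ S \ T, ql j (b j) := by
      refine (Finset.sum_subset ?_ ?_).symm
      · intro j hj
        simp only [Finset.mem_sdiff] at hj
        simpa using hj.2
      · intro j hjT hj
        refine hql0' j (fun hjS => hj ?_)
        simp only [Finset.mem_compl] at hjT
        exact Finset.mem_sdiff.mpr ⟨hjS, hjT⟩
    have h3 : ∑ j ∈ S, (if j ∈ T then (f j - qw j (b j) + ql j (b j)) else 0)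
        = ∑ j ∈ S ∩ T, (f j - qw j (b j) + ql j (b j)) := by
      rw [Finset.sum_ite_mem]
    have h4 : ∑ j ∈ S ∩ T, ql j (b j) + ∑ j ∈ S \ T, ql j (b j) = ∑ j ∈ S, ql j (b j) :=
      Finset.sum_inter_add_sum_sdiff S T _
    have hfv : ∑ j ∈ S ∩ T, f j ≤ v T :=
      le_trans (hf _ Finset.inter_subset_left) (hv_mono _ _ Finset.inter_subset_right)
    have h5 : ∑ j ∈ S ∩ T, (f j - qw j (b j) + ql j (b j))
        = ∑ j ∈ S ∩ T, f j - ∑ j ∈ S ∩ T, qw j (b j) + ∑ j ∈ S ∩ T, ql j (b j) := by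
      rw [Finset.sum_add_distrib, Finset.sum_sub_distrib]
    rw [Finset.sum_sub_distrib, h1, h2, h3, h5]
    linarith
  calc ∑ j ∈ S,
          ((∑ T ∈ Finset.univ.filter (fun T : Finset (Fin m) => j ∈ T), w T)
              * (f j - qw j (b j) + ql j (b j)) - ql j (b j))
      = ∑ T : Finset (Fin m), w T *
          (∑ j ∈ S, ((if j ∈ T then (f j - qw j (b j) + ql j (b j)) else 0) - ql j (b j))) := by
        simp only [Finset.mul_sum]
        rw [Finset.sum_comm]
        refine Finset.sum_congr rfl (fun j hj => ?_)
        rw [Finset.sum_filter, Finset.sum_mul]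
        have : ∀ T : Finset (Fin m),
            w T * ((if j ∈ T then (f j - qw j (b j) + ql j (b j)) else 0) - ql j (b j))
            = (if j ∈ T then w T else 0) * (f j - qw j (b j) + ql j (b j)) - w T * ql j (b j) := by
          intro T; by_cases h : j ∈ T <;> simp [h] <;> ring
        simp only [this, Finset.sum_sub_distrib, ← Finset.sum_mul, hw_sum]
        ring
    _ ≤ ∑ T : Finset (Fin m),
        w T * (v T - (∑ j ∈ T, qw j (b j)) - ∑ j ∈ Tᶜ, ql j (b j)) :=
        Finset.sum_le_sum (fun T _ => mul_le_mul_of_nonneg_left (key T) (hw_nonneg T))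
end

section
/- Let S be a finite set and let v : 2^S → ℝ be a subadditive set function, i.e. v(A∪B) ≤ v(A) + v(B) for all A, B ⊆ S. Let a = (a_j)_{j∈S} and t = (t_j)_{j∈S} be independent and identically distributed random vectors with values in ℝ^S. Then E[v({j ∈ S : a_j ≥ t_j})] ≥ v(S)/2. -/
open MeasureTheory

/-- If `v` is a subadditive set function on a finite set of items and
`a`, `t` are independent, identically distributed random vectors of reals indexed by the
items, then `E[v({j : a_j ≥ t_j})] ≥ v(S)/2`, where `S` is the whole item set. -/
theorem stmt_15
    {ι : Type*} [Fintype ι] [DecidableEq ι]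
    (v : Finset ι → ℝ)
    (hv_subadd : ∀ A B : Finset ι, v (A ∪ B) ≤ v A + v B)
    {Ω : Type*} [MeasurableSpace Ω] (μ : Measure Ω) [IsProbabilityMeasure μ]
    (a t : Ω → ι → ℝ)
    (ha : Measurable a) (ht : Measurable t)
    (hindep : ProbabilityTheory.IndepFun a t μ)
    (hident : Measure.map a μ = Measure.map t μ) :
    (∫ ω, v (Finset.univ.filter fun j => t ω j ≤ a ω j) ∂μ)
      ≥ v Finset.univ / 2 := by
  classical
  set g : (ι → ℝ) × (ι → ℝ) → ℝ :=
    fun p => v (Finset.univ.filter fun j => p.2 j ≤ p.1 j) with hg_def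
  -- measurability of g
  letI : MeasurableSpace (Finset ι) := ⊤
  have hfil : Measurable (fun p : (ι → ℝ) × (ι → ℝ) =>
      (Finset.univ.filter fun j => p.2 j ≤ p.1 j)) := by
    apply measurable_to_countable'
    intro A
    have : (fun p : (ι → ℝ) × (ι → ℝ) =>
        (Finset.univ.filter fun j => p.2 j ≤ p.1 j)) ⁻¹' {A}
        = ⋂ j : ι, {p : (ι → ℝ) × (ι → ℝ) | j ∈ A ↔ p.2 j ≤ p.1 j} := by
      ext p
      simp only [Set.mem_preimage, Set.mem_singleton_iff, Set.mem_iInter,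
        Set.mem_setOf_eq]
      constructor
      · rintro rfl j; simp
      · intro h
        ext j
        simp [← h j]
    rw [this]
    apply MeasurableSet.iInter
    intro j
    have h1 : Measurable fun p : (ι → ℝ) × (ι → ℝ) => p.1 j :=
      (measurable_pi_apply j).comp measurable_fst
    have h2 : Measurable fun p : (ι → ℝ) × (ι → ℝ) => p.2 j :=
      (measurable_pi_apply j).comp measurable_snd
    have hle : MeasurableSet {p : (ι → ℝ) × (ι → ℝ) | p.2 j ≤ p.1 j} :=
      measurableSet_le h2 h1
    by_cases hj : j ∈ A
    · have : {p : (ι → ℝ) × (ι → ℝ) | j ∈ A ↔ p.2 j ≤ p.1 j}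
          = {p | p.2 j ≤ p.1 j} := by ext p; simp [hj]
      rw [this]; exact hle
    · have : {p : (ι → ℝ) × (ι → ℝ) | j ∈ A ↔ p.2 j ≤ p.1 j}
          = {p | p.2 j ≤ p.1 j}ᶜ := by ext p; simp [hj]
      rw [this]; exact hle.compl
  have hg : Measurable g := (measurable_from_top (f := v)).comp hfil
  -- bound on g
  obtain ⟨C, hC⟩ : ∃ C : ℝ, ∀ A : Finset ι, |v A| ≤ C := by
    refine ⟨∑ A : Finset ι, |v A|, fun A => ?_⟩
    exact Finset.single_le_sum (f := fun A => |v A|) (fun _ _ => abs_nonneg _)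
      (Finset.mem_univ A)
  have hint : ∀ (f : Ω → (ι → ℝ) × (ι → ℝ)), Measurable f →
      Integrable (fun ω => g (f ω)) μ := by
    intro f hf
    refine ⟨(hg.comp hf).aestronglyMeasurable, ?_⟩
    apply HasFiniteIntegral.of_bounded (C := C)
    filter_upwards with ω
    exact hC _
  have hpair : Measurable fun ω => (a ω, t ω) := ha.prodMk ht
  have hpair' : Measurable fun ω => (t ω, a ω) := ht.prodMk ha
  -- equality of joint laws
  have hmaps : Measure.map (fun ω => (a ω, t ω)) μ
      = Measure.map (fun ω => (t ω, a ω)) μ := by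
    rw [(ProbabilityTheory.indepFun_iff_map_prod_eq_prod_map_map
      ha.aemeasurable ht.aemeasurable).mp hindep,
      (ProbabilityTheory.indepFun_iff_map_prod_eq_prod_map_map
      ht.aemeasurable ha.aemeasurable).mp hindep.symm, hident]
  -- equality of expectations
  have hexch : (∫ ω, g (a ω, t ω) ∂μ) = ∫ ω, g (t ω, a ω) ∂μ := by
    rw [← integral_map hpair.aemeasurable hg.aestronglyMeasurable,
      ← integral_map hpair'.aemeasurable hg.aestronglyMeasurable, hmaps]
  -- pointwise subadditivity bound
  have hpt : ∀ ω, v Finset.univ ≤ g (a ω, t ω) + g (t ω, a ω) := by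
    intro ω
    have hunion : (Finset.univ.filter fun j => t ω j ≤ a ω j)
        ∪ (Finset.univ.filter fun j => a ω j ≤ t ω j) = Finset.univ := by
      ext j
      simp only [Finset.mem_union, Finset.mem_filter, Finset.mem_univ, true_and,
        iff_true]
      exact le_total (t ω j) (a ω j)
    calc v Finset.univ
        = v ((Finset.univ.filter fun j => t ω j ≤ a ω j)
            ∪ (Finset.univ.filter fun j => a ω j ≤ t ω j)) := by rw [hunion]
      _ ≤ _ := hv_subadd _ _
  have hI1 := hint _ hpair
  have hI2 := hint _ hpair'
  have hsum : v Finset.univ ≤ ∫ ω, (g (a ω, t ω) + g (t ω, a ω)) ∂μ := by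
    have := integral_mono (integrable_const (v Finset.univ)) (hI1.add hI2)
      (fun ω => hpt ω)
    simpa using this
  rw [integral_add hI1 hI2, ← hexch] at hsum
  have : (∫ ω, g (a ω, t ω) ∂μ)
      = ∫ ω, v (Finset.univ.filter fun j => t ω j ≤ a ω j) ∂μ := rfl
  linarith [hsum, this ▸ hsum]
end
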